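/- Assume the periodic perforations, the perturbed perforations, Assumption (A2) and the boundary-measure bound as described in the context, and let w^per : ℝ^d → ℝ be Lipschitz, ℤ^d-periodic and equal to 0 on closure(𝒪^per). Then there exists a Lipschitz function φ : ℝ^d → ℝ such that φ = −w^per on ⋃_{k∈ℤ^d} closure(𝒪_k) and ∫_{ℝ^d} (φ² + ‖∇φ‖²) < ∞, where ∇φ denotes the almost-everywhere defined derivative of the Lipschitz function φ. -/

import Mathlib

/-!
Write `d_k` for the distance to the `k`-th periodic hole. Since `w^per` is `L`-Lipschitz and
vanishes on the holes, `|w^per| ≤ L d_k`, and `closure 𝒪_k ⊆ {d_k ≤ α_k}` by (A2); so on the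
perturbed holes `|w^per|` is dominated by the barrier `h = sup_k L (2 α_k - d_k)⁺`. Clamping
`-w^per` to `[-h, h]` gives an `L`-Lipschitz function that equals `-w^per` there, vanishes on the
periodic holes, and vanishes outside the union of the supports `{d_k ≤ 2 α_k}` of the barrier
terms, which is closed because these supports are locally finite. The energy density is bounded,
and outside the periodic holes the `k`-th support lies in the collar `{dist(·, ∂𝒪_k^per) < 3 α_k}`,
whose measure is at most `3 C̄ α_k` for all but finitely many `k`; these bounds are summable.
-/

open MeasureTheory Metric Set Filter Topology Asymptotics RealInnerProductSpace Pointwise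

noncomputable section

abbrev Euc (d : ℕ) := EuclideanSpace ℝ (Fin d)

def unitCube (d : ℕ) : Set (Euc d) := {x | ∀ i, x i ∈ Set.Ioo (0:ℝ) 1}

def closedUnitCube (d : ℕ) : Set (Euc d) := {x | ∀ i, x i ∈ Set.Icc (0:ℝ) 1}

def box {d : ℕ} (a b : Fin d → ℝ) : Set (Euc d) := {x | ∀ i, x i ∈ Set.Icc (a i) (b i)}

def cell (d : ℕ) (k : Fin d → ℤ) : Set (Euc d) := {x | ∀ i, x i - (k i : ℝ) ∈ Set.Ioo (0:ℝ) 1}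

def perHole {d : ℕ} (Oper : Set (Euc d)) (k : Fin d → ℤ) : Set (Euc d) :=
  {x | (WithLp.toLp 2 (fun i => x i - (k i : ℝ)) : Euc d) ∈ Oper}

def perHoles {d : ℕ} (Oper : Set (Euc d)) : Set (Euc d) := ⋃ k : Fin d → ℤ, perHole Oper k

def holes {d : ℕ} (O : (Fin d → ℤ) → Set (Euc d)) : Set (Euc d) := ⋃ k, O k

def perPlus {d : ℕ} (Oper : Set (Euc d)) (k : Fin d → ℤ) (a : ℝ) : Set (Euc d) :=
  {x | Metric.infDist x (perHole Oper k) < a}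

def perMinus {d : ℕ} (Oper : Set (Euc d)) (k : Fin d → ℤ) (a : ℝ) : Set (Euc d) :=
  {x ∈ perHole Oper k | a < Metric.infDist x (frontier (perHole Oper k))}

def lap {d : ℕ} (w : Euc d → ℝ) (x : Euc d) : ℝ :=
  ∑ i, fderiv ℝ (fun y => fderiv ℝ w y (EuclideanSpace.single i 1)) x (EuclideanSpace.single i 1)

open scoped NNReal

section Barrier

variable {X : Type*} [PseudoMetricSpace X]

lemma LipschitzWith.abs_le_mul_infDist {w : X → ℝ} {K : ℝ≥0} (hw : LipschitzWith K w)
    {s : Set X} (hs : s.Nonempty) (hws : ∀ y ∈ s, w y = 0) (x : X) :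
    |w x| ≤ K * infDist x s := by
  have : Nonempty s := hs.to_subtype
  rw [infDist_eq_iInf, Real.mul_iInf_of_nonneg K.coe_nonneg]
  refine le_ciInf fun ⟨y, hy⟩ => ?_
  simpa [hws y hy, Real.dist_eq] using hw.dist_le_mul x y

lemma dist_le_infDist_add_of_subset_closedBall {s : Set X} (hs : s.Nonempty) {c : X} {ρ : ℝ}
    (hsc : s ⊆ closedBall c ρ) (x : X) : dist x c ≤ infDist x s + ρ := by
  rw [← sub_le_iff_le_add, le_infDist hs]
  intro y hy
  linarith [dist_triangle x y c, mem_closedBall.1 (hsc hy)]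

def barrier (K : ℝ≥0) (s : Set X) (a : ℝ) (x : X) : ℝ := max 0 (K * (2 * a - infDist x s))

variable {K : ℝ≥0} {s : Set X} {a : ℝ}

lemma barrier_nonneg (x : X) : 0 ≤ barrier K s a x := le_max_left _ _

lemma barrier_le (x : X) : barrier K s a x ≤ max 0 (2 * K * a) := by
  have := infDist_nonneg (x := x) (s := s)
  exact max_le_max le_rfl (by nlinarith [K.coe_nonneg])

lemma mul_le_barrier {x : X} (hx : infDist x s ≤ a) : K * a ≤ barrier K s a x :=
  le_max_of_le_right (by gcongr; linarith)

lemma lipschitzWith_barrier : LipschitzWith K (barrier K s a) := by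
  refine LipschitzWith.of_le_add_mul K fun x y =>
    max_le (add_nonneg (barrier_nonneg y) (by positivity)) ?_
  calc (K : ℝ) * (2 * a - infDist x s) ≤ K * (2 * a - infDist y s) + K * dist x y := by
        rw [← mul_add]; gcongr
        linarith [infDist_le_infDist_add_dist (x := y) (y := x) (s := s), dist_comm x y]
    _ ≤ barrier K s a y + K * dist x y := by gcongr; exact le_max_right _ _

lemma tsupport_barrier_subset :
    tsupport (barrier K s a) ⊆ {x | 0 < a ∧ infDist x s ≤ 2 * a} := by
  have hsupp : Function.support (barrier K s a) ⊆ {x | infDist x s < 2 * a} := by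
    intro x hx
    show infDist x s < 2 * a
    by_contra h
    exact hx (max_eq_left (mul_nonpos_of_nonneg_of_nonpos K.coe_nonneg (by linarith [not_lt.1 h])))
  intro x hx
  have hcl := closure_mono hsupp hx
  obtain ⟨y, hy⟩ := closure_nonempty_iff.1 ⟨x, hcl⟩
  exact ⟨by linarith [infDist_nonneg (x := y) (s := s), show infDist y s < 2 * a from hy],
    closure_lt_subset_le (continuous_infDist_pt s) continuous_const hcl⟩

lemma tsupport_barrier_subset_closedBall (hs : s.Nonempty) {c : X} {ρ B : ℝ}
    (hsc : s ⊆ closedBall c ρ) (haB : a ≤ B) :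
    tsupport (barrier K s a) ⊆ closedBall c (2 * B + ρ) :=
  fun x hx => by
    have := (tsupport_barrier_subset hx).2
    have := dist_le_infDist_add_of_subset_closedBall hs hsc x
    rw [mem_closedBall]; linarith

end Barrier

section Supremum

variable {X ι : Type*}

lemma LipschitzWith.ciSup [PseudoMetricSpace X] [Nonempty ι] {f : ι → X → ℝ} {K : ℝ≥0}
    (hf : ∀ i, LipschitzWith K (f i)) (hbdd : ∀ x, BddAbove (range fun i => f i x)) :
    LipschitzWith K fun x => ⨆ i, f i x :=
  LipschitzWith.of_le_add_mul K fun x y => ciSup_le fun i =>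
    calc f i x ≤ f i y + K * dist x y := (hf i).le_add_mul x y
      _ ≤ (⨆ i, f i y) + K * dist x y := by gcongr; exact le_ciSup (hbdd y) i

lemma tsupport_ciSup_subset [TopologicalSpace X] {f : ι → X → ℝ}
    (hf : LocallyFinite fun i => tsupport (f i)) :
    tsupport (fun x => ⨆ i, f i x) ⊆ ⋃ i, tsupport (f i) := by
  refine closure_minimal (fun x hx => ?_) (hf.isClosed_iUnion fun i => isClosed_tsupport _)
  by_contra h
  simp only [mem_iUnion, not_exists] at h
  exact hx (by simp [image_eq_zero_of_notMem_tsupport (h _)])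

end Supremum

section Extension

variable {X ι : Type*} [PseudoMetricSpace X]

def barrierSup (K : ℝ≥0) (s : ι → Set X) (α : ι → ℝ) (x : X) : ℝ :=
  ⨆ i, barrier K (s i) (α i) x

def barrierExtension (K : ℝ≥0) (s : ι → Set X) (α : ι → ℝ) (w : X → ℝ) (x : X) :
    ℝ :=
  min (barrierSup K s α x) (max (-barrierSup K s α x) (-w x))

variable {K : ℝ≥0} {s : ι → Set X} {α : ι → ℝ} {B : ℝ} {w : X → ℝ}

lemma barrierSup_nonneg (x : X) : 0 ≤ barrierSup K s α x :=
  Real.iSup_nonneg fun _ => barrier_nonneg x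

lemma barrier_le_of_le (hαB : ∀ i, α i ≤ B) (i : ι) (x : X) :
    barrier K (s i) (α i) x ≤ max 0 (2 * K * B) :=
  (barrier_le x).trans (by gcongr; exact hαB i)

lemma bddAbove_range_barrier (hαB : ∀ i, α i ≤ B) (x : X) :
    BddAbove (range fun i => barrier K (s i) (α i) x) :=
  ⟨_, forall_mem_range.2 fun i => barrier_le_of_le hαB i x⟩

lemma barrierSup_le [Nonempty ι] (hαB : ∀ i, α i ≤ B) (x : X) :
    barrierSup K s α x ≤ max 0 (2 * K * B) :=
  ciSup_le fun i => barrier_le_of_le hαB i x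

lemma lipschitzWith_barrierSup [Nonempty ι] (hαB : ∀ i, α i ≤ B) :
    LipschitzWith K (barrierSup K s α) :=
  LipschitzWith.ciSup (fun _ => lipschitzWith_barrier) (bddAbove_range_barrier hαB)

lemma lipschitzWith_barrierExtension [Nonempty ι] (hαB : ∀ i, α i ≤ B)
    (hw : LipschitzWith K w) : LipschitzWith K (barrierExtension K s α w) := by
  have hH := lipschitzWith_barrierSup (K := K) (s := s) hαB
  have := hH.min (hH.neg.max hw.neg)
  rwa [max_self, max_self] at this

lemma abs_barrierExtension_le (x : X) : |barrierExtension K s α w x| ≤ barrierSup K s α x :=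
  abs_le.2 ⟨le_min (by linarith [barrierSup_nonneg (K := K) (s := s) (α := α) x])
    (le_max_left _ _), min_le_left _ _⟩

lemma barrierExtension_eq_neg_of_abs_le {x : X} (hx : |w x| ≤ barrierSup K s α x) :
    barrierExtension K s α w x = -w x := by
  obtain ⟨h₁, h₂⟩ := abs_le.1 hx
  rw [barrierExtension, max_eq_right (by linarith), min_eq_right (by linarith)]

lemma barrierExtension_eq_zero {x : X} (hx : w x = 0) : barrierExtension K s α w x = 0 := by
  rw [barrierExtension_eq_neg_of_abs_le (by simpa [hx] using barrierSup_nonneg x), hx, neg_zero]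

lemma barrierExtension_eq_neg (hαB : ∀ i, α i ≤ B) (hw : LipschitzWith K w) {i : ι}
    (hs : (s i).Nonempty) (hws : ∀ y ∈ s i, w y = 0) {x : X} (hx : infDist x (s i) ≤ α i) :
    barrierExtension K s α w x = -w x := by
  refine barrierExtension_eq_neg_of_abs_le ?_
  calc |w x| ≤ K * infDist x (s i) := hw.abs_le_mul_infDist hs hws x
    _ ≤ K * α i := by gcongr
    _ ≤ barrier K (s i) (α i) x := mul_le_barrier hx
    _ ≤ barrierSup K s α x := le_ciSup (bddAbove_range_barrier hαB x) i

lemma tsupport_barrierExtension_subset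
    (hlf : LocallyFinite fun i => tsupport (barrier K (s i) (α i))) :
    tsupport (barrierExtension K s α w) ⊆ ⋃ i, tsupport (barrier K (s i) (α i)) := by
  refine (closure_mono fun x hx => ?_).trans (tsupport_ciSup_subset hlf)
  have := abs_barrierExtension_le (K := K) (s := s) (α := α) (w := w) x
  exact fun h => hx (abs_nonpos_iff.1 (h ▸ this))

end Extension

lemma measure_iUnion_lt_top_of_eventually_le_ofReal {Ω ι : Type*} [MeasurableSpace Ω]
    [Countable ι] {μ : Measure Ω} {s : ι → Set Ω} {c : ι → ℝ} (hc : Summable c)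
    (hs : ∀ i, μ (s i) < ⊤) (hsc : ∀ᶠ i in cofinite, μ (s i) ≤ ENNReal.ofReal (c i)) :
    μ (⋃ i, s i) < ⊤ := by
  have hsum : Summable fun i => (μ (s i)).toReal :=
    hc.abs.of_norm_bounded_eventually <| hsc.mono fun i hi => by
      rw [Real.norm_eq_abs, abs_of_nonneg ENNReal.toReal_nonneg]
      exact ENNReal.toReal_le_of_le_ofReal (abs_nonneg _)
        (hi.trans (ENNReal.ofReal_le_ofReal (le_abs_self _)))
  calc μ (⋃ i, s i) ≤ ∑' i, μ (s i) := measure_iUnion_le s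
    _ = ENNReal.ofReal (∑' i, (μ (s i)).toReal) := by
      rw [ENNReal.ofReal_tsum_of_nonneg (fun _ => ENNReal.toReal_nonneg) hsum]
      exact tsum_congr fun i => (ENNReal.ofReal_toReal (hs i).ne).symm
    _ < ⊤ := ENNReal.ofReal_lt_top

lemma lintegral_sq_add_sq_norm_gradient_lt_top {E : Type*} [NormedAddCommGroup E]
    [InnerProductSpace ℝ E] [CompleteSpace E] [MeasurableSpace E] (μ : Measure E)
    {φ : E → ℝ} {K : ℝ≥0} (hφ : LipschitzWith K φ) {C : ℝ} (hC : ∀ x, |φ x| ≤ C)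
    {U : Set E} (hU : IsOpen U) (hφU : EqOn φ 0 U) (hμ : μ (tsupport φ \ U) < ⊤) :
    ∫⁻ x, ENNReal.ofReal (φ x ^ 2 + ‖gradient φ x‖ ^ 2) ∂μ < ⊤ := by
  have hbound : ∀ x, ENNReal.ofReal (φ x ^ 2 + ‖gradient φ x‖ ^ 2)
      ≤ (tsupport φ \ U).indicator (fun _ => ENNReal.ofReal (C ^ 2 + K ^ 2)) x := by
    intro x
    by_cases hx : x ∈ tsupport φ \ U
    · rw [indicator_of_mem hx]
      have hgrad : ‖gradient φ x‖ ≤ K := by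
        rw [gradient, LinearIsometryEquiv.norm_map]
        exact norm_fderiv_le_of_lipschitz ℝ hφ
      obtain ⟨hC₁, hC₂⟩ := abs_le.1 (hC x)
      exact ENNReal.ofReal_le_ofReal
        (add_le_add (sq_le_sq' hC₁ hC₂) (pow_le_pow_left₀ (norm_nonneg _) hgrad 2))
    · have hzero : φ =ᶠ[𝓝 x] 0 := by
        by_cases hxU : x ∈ U
        · exact eventuallyEq_of_mem (hU.mem_nhds hxU) hφU
        · exact notMem_tsupport_iff_eventuallyEq.1 fun h => hx ⟨h, hxU⟩
      rw [indicator_of_notMem hx, hzero.eq_of_nhds, hzero.gradient_eq]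
      simp [gradient]
  calc ∫⁻ x, ENNReal.ofReal (φ x ^ 2 + ‖gradient φ x‖ ^ 2) ∂μ
      ≤ ∫⁻ x, (tsupport φ \ U).indicator (fun _ => ENNReal.ofReal (C ^ 2 + K ^ 2)) x ∂μ :=
        lintegral_mono hbound
    _ ≤ ENNReal.ofReal (C ^ 2 + K ^ 2) * μ (tsupport φ \ U) := lintegral_indicator_const_le _ _
    _ < ⊤ := ENNReal.mul_lt_top ENNReal.ofReal_lt_top hμ

section Collar

variable {E : Type*} [NormedAddCommGroup E]

lemma infDist_frontier_le_infDist [NormedSpace ℝ E] [FiniteDimensional ℝ E] {s : Set E}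
    (hs : s.Nonempty) {x : E} (hx : x ∉ s) : infDist x (frontier s) ≤ infDist x s := by
  obtain ⟨y, hy, hxy⟩ := exists_mem_frontier_infDist_compl_eq_dist (s := sᶜ) hx
    (compl_ne_univ.2 hs)
  rw [compl_compl] at hxy
  rw [frontier_compl] at hy
  exact hxy ▸ infDist_le_dist_of_mem hy

lemma tsupport_barrier_diff_subset [NormedSpace ℝ E] [FiniteDimensional ℝ E] {K : ℝ≥0}
    {s : Set E} (hs : s.Nonempty) (a : ℝ) :
    tsupport (barrier K s a) \ s ⊆ {x | infDist x (frontier s) < 3 * a} := by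
  rintro x ⟨hx, hxs⟩
  obtain ⟨ha, hxa⟩ := tsupport_barrier_subset hx
  show infDist x (frontier s) < 3 * a
  linarith [infDist_frontier_le_infDist hs hxs]

lemma infDist_frontier_preimage_sub (c : E) (s : Set E) (x : E) :
    infDist x (frontier ((· - c) ⁻¹' s)) = infDist (x - c) (frontier s) := by
  have := (Homeomorph.subRight c).preimage_frontier s
  rw [Homeomorph.coe_subRight] at this
  have himg : (· - c) ⁻¹' frontier s = (· + c) '' frontier s := by
    simp_rw [image_add_right, sub_eq_add_neg]
  rw [← this, himg, ← infDist_image (isometry_add_right c) (x := x - c), sub_add_cancel]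

lemma measure_infDist_frontier_preimage_sub_lt [MeasurableSpace E] [MeasurableAdd E]
    (μ : Measure E) [μ.IsAddRightInvariant] (c : E) (s : Set E) (a : ℝ) :
    μ {x | infDist x (frontier ((· - c) ⁻¹' s)) < a} =
      μ {x | infDist x (frontier s) < a} := by
  simp_rw [infDist_frontier_preimage_sub, sub_eq_add_neg]
  exact measure_preimage_add_right μ (-c) {x | infDist x (frontier s) < a}

end Collar

section Perforation

variable {d : ℕ}

def latticeVec (k : Fin d → ℤ) : Euc d := WithLp.toLp 2 fun i => (k i : ℝ)

lemma perHole_eq_preimage (Oper : Set (Euc d)) (k : Fin d → ℤ) :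
    perHole Oper k = (· - latticeVec k) ⁻¹' Oper := rfl

lemma perHole_nonempty {Oper : Set (Euc d)} (h : Oper.Nonempty) (k : Fin d → ℤ) :
    (perHole Oper k).Nonempty := by
  obtain ⟨y, hy⟩ := h
  exact ⟨y + latticeVec k, by rwa [perHole_eq_preimage, mem_preimage, add_sub_cancel_right]⟩

lemma isOpen_perHoles {Oper : Set (Euc d)} (h : IsOpen Oper) : IsOpen (perHoles Oper) :=
  isOpen_iUnion fun k => h.preimage (continuous_sub_right (latticeVec k))

lemma unitCube_subset_closedBall : unitCube d ⊆ closedBall 0 √d := by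
  intro x hx
  rw [mem_closedBall_zero_iff, EuclideanSpace.norm_eq]
  refine Real.sqrt_le_sqrt ?_
  calc ∑ i, ‖x i‖ ^ 2 ≤ ∑ _i : Fin d, (1 : ℝ) := Finset.sum_le_sum fun i _ => by
        rw [Real.norm_eq_abs, sq_abs]; nlinarith [(hx i).1, (hx i).2]
    _ = d := by simp

lemma perHole_subset_closedBall {Oper : Set (Euc d)} (h : closure Oper ⊆ unitCube d)
    (k : Fin d → ℤ) : perHole Oper k ⊆ closedBall (latticeVec k) √d := fun _ hx =>
  mem_closedBall_iff_norm.2 <| mem_closedBall_zero_iff.1 <|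
    unitCube_subset_closedBall (h (subset_closure hx))

lemma locallyFinite_closedBall_latticeVec (R : ℝ) :
    LocallyFinite fun k : Fin d → ℤ => closedBall (latticeVec k) R := by
  intro x
  refine ⟨ball x 1, ball_mem_nhds x one_pos,
    (finite_Icc (fun i => ⌈x i - (R + 1)⌉) (fun i => ⌊x i + (R + 1)⌋)).subset ?_⟩
  rintro k ⟨y, hyk, hyx⟩
  have hkx : dist (latticeVec k) x ≤ R + 1 := by
    linarith [dist_triangle (latticeVec k) y x, mem_closedBall'.1 hyk, mem_ball.1 hyx]
  have hcoord : ∀ i, |(k i : ℝ) - x i| ≤ R + 1 := fun i =>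
    (PiLp.dist_apply_le (latticeVec k) x i).trans hkx
  exact ⟨fun i => Int.ceil_le.2 (by linarith [(abs_le.1 (hcoord i)).1]),
    fun i => Int.le_floor.2 (by linarith [(abs_le.1 (hcoord i)).2])⟩

end Perforation

lemma volume_iUnion_tsupport_barrier_diff_perHole_lt_top {d : ℕ} {Oper : Set (Euc d)}
    (hOperNe : Oper.Nonempty) (hOperQ : closure Oper ⊆ unitCube d) {α : (Fin d → ℤ) → ℝ}
    (hαsum : Summable α) {Cb ab : ℝ} (hab : 0 < ab)
    (hFederer : ∀ a : ℝ, 0 < a → a < ab →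
      volume {x : Euc d | infDist x (frontier Oper) < a} ≤ ENNReal.ofReal (Cb * a))
    (K : ℝ≥0) :
    volume (⋃ k, tsupport (barrier K (perHole Oper k) (α k)) \ perHole Oper k) < ⊤ := by
  refine measure_iUnion_lt_top_of_eventually_le_ofReal ((hαsum.mul_left 3).mul_left Cb)
    (fun k => ?_) ?_
  · exact (isBounded_closedBall.subset (sdiff_subset.trans (tsupport_barrier_subset_closedBall
      (perHole_nonempty hOperNe k) (perHole_subset_closedBall hOperQ k) le_rfl))).measure_lt_top
  filter_upwards [(hαsum.mul_left 3).tendsto_cofinite_zero.eventually_lt_const hab] with k hk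
  calc volume (tsupport (barrier K (perHole Oper k) (α k)) \ perHole Oper k)
      ≤ volume {x | infDist x (frontier (perHole Oper k)) < 3 * α k} :=
        measure_mono (tsupport_barrier_diff_subset (perHole_nonempty hOperNe k) _)
    _ = volume {x | infDist x (frontier Oper) < 3 * α k} := by
      rw [perHole_eq_preimage]; exact measure_infDist_frontier_preimage_sub_lt _ _ _ _
    _ ≤ ENNReal.ofReal (Cb * (3 * α k)) := by
      rcases le_or_gt (3 * α k) 0 with hk₀ | hk₀
      · have : {x : Euc d | infDist x (frontier Oper) < 3 * α k} = ∅ :=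
          eq_empty_of_forall_notMem fun x hx => (infDist_nonneg.trans_lt hx).not_ge hk₀
        simp [this]
      · exact hFederer _ hk₀ hk

theorem minimization_space_nonempty_general (d : ℕ)
    (Oper : Set (Euc d)) (hOperOpen : IsOpen Oper) (hOperNe : Oper.Nonempty)
    (hOperQ : closure Oper ⊆ unitCube d)
    (O : (Fin d → ℤ) → Set (Euc d))
    (α : (Fin d → ℤ) → ℝ) (hαsum : Summable α)
    (hA2 : ∀ k, perMinus Oper k (α k) ⊆ O k ∧ O k ⊆ perPlus Oper k (α k))
    (Cb ab : ℝ) (hab : 0 < ab)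
    (hFederer : ∀ a : ℝ, 0 < a → a < ab →
      volume {x : Euc d | Metric.infDist x (frontier Oper) < a} ≤ ENNReal.ofReal (Cb * a))
    (wper : Euc d → ℝ) (L : NNReal) (hwperlip : LipschitzWith L wper)
    (hwperzero : ∀ x ∈ closure (perHoles Oper), wper x = 0) :
    ∃ φ : Euc d → ℝ, (∃ Lφ : NNReal, LipschitzWith Lφ φ) ∧
      (∀ x ∈ ⋃ k, closure (O k), φ x = - wper x) ∧
      ∫⁻ x, ENNReal.ofReal ((φ x) ^ 2 + ‖gradient φ x‖ ^ 2) < ⊤ := by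
  have hne := perHole_nonempty hOperNe
  obtain ⟨B, hB⟩ := hαsum.tendsto_cofinite_zero.bddAbove_range_of_cofinite
  have hαB : ∀ k, α k ≤ B := fun k => hB (mem_range_self k)
  have hlf : LocallyFinite fun k => tsupport (barrier L (perHole Oper k) (α k)) :=
    (locallyFinite_closedBall_latticeVec (2 * B + √d)).subset fun k =>
      tsupport_barrier_subset_closedBall (hne k) (perHole_subset_closedBall hOperQ k) (hαB k)
  have hφ := lipschitzWith_barrierExtension (s := perHole Oper) hαB hwperlip
  refine ⟨barrierExtension L (perHole Oper) α wper, ⟨L, hφ⟩, fun x hx => ?_, ?_⟩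
  · obtain ⟨k, hx⟩ := mem_iUnion.1 hx
    exact barrierExtension_eq_neg hαB hwperlip (hne k)
      (fun y hy => hwperzero y (subset_closure (mem_iUnion_of_mem k hy)))
      (closure_lt_subset_le (continuous_infDist_pt _) continuous_const
        (closure_mono (hA2 k).2 hx))
  refine lintegral_sq_add_sq_norm_gradient_lt_top volume hφ
    (fun x => (abs_barrierExtension_le x).trans (barrierSup_le hαB x)) (isOpen_perHoles hOperOpen)
    (fun x hx => barrierExtension_eq_zero (hwperzero x (subset_closure hx)))
    ((measure_mono ?_).trans_lt
      (volume_iUnion_tsupport_barrier_diff_perHole_lt_top hOperNe hOperQ hαsum hab hFederer L))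
  rintro x ⟨hx, hxU⟩
  obtain ⟨k, hk⟩ := mem_iUnion.1 (tsupport_barrierExtension_subset hlf hx)
  exact mem_iUnion.2 ⟨k, hk, fun h => hxU (mem_iUnion_of_mem k h)⟩

/-- non-emptiness of the minimization space `V` (Lemma 5.8 of the paper):
there is a finite-energy Lipschitz extension of the boundary datum `-w^per`. -/
theorem minimization_space_nonempty (d : ℕ) (hd : 2 ≤ d)
    (Oper : Set (Euc d)) (hOperOpen : IsOpen Oper) (hOperNe : Oper.Nonempty)
    (hOperQ : closure Oper ⊆ unitCube d)
    (O : (Fin d → ℤ) → Set (Euc d)) (hOopen : ∀ k, IsOpen (O k))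
    (hONe : ∀ k, (O k).Nonempty) (hOcell : ∀ k, closure (O k) ⊆ cell d k)
    (α : (Fin d → ℤ) → ℝ) (hαpos : ∀ k, 0 ≤ α k) (hαsum : Summable α)
    (hA2 : ∀ k, perMinus Oper k (α k) ⊆ O k ∧ O k ⊆ perPlus Oper k (α k))
    (Cb ab : ℝ) (hCb : 0 < Cb) (hab : 0 < ab)
    (hFederer : ∀ a : ℝ, 0 < a → a < ab →
      volume {x : Euc d | Metric.infDist x (frontier Oper) < a} ≤ ENNReal.ofReal (Cb * a))
    (wper : Euc d → ℝ) (L : NNReal) (hwperlip : LipschitzWith L wper)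
    (hwperiodic : ∀ (x : Euc d) (k : Fin d → ℤ),
      wper (x + (WithLp.toLp 2 (fun i => (k i : ℝ)) : Euc d)) = wper x)
    (hwperzero : ∀ x ∈ closure (perHoles Oper), wper x = 0) :
    ∃ φ : Euc d → ℝ, (∃ Lφ : NNReal, LipschitzWith Lφ φ) ∧
      (∀ x ∈ ⋃ k, closure (O k), φ x = - wper x) ∧
      ∫⁻ x, ENNReal.ofReal ((φ x) ^ 2 + ‖gradient φ x‖ ^ 2) < ⊤ :=
  minimization_space_nonempty_general d Oper hOperOpen hOperNe hOperQ O α hαsum hA2 Cb ab hab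
    hFederer wper L hwperlip hwperzero
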